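/- arXiv:2305.09954 — 2 statements merged into one kernel-verified Lean document; each statement's English description precedes it below -/
import Mathlib

section
/- For a unit-energy waveform s supported on [0,T_s] and any τ ∈ [0,T_s], the MUI factor satisfies ρ_τ² + ρ_{T_s−τ}² ≤ 1, i.e. the interference power of an asynchronously offset symbol pair never exceeds the synchronous interference power 1. -/
open MeasureTheory Set

/-! The lagged product `s t * s (t - τ)` vanishes for `t < τ`, so by Cauchy–Schwarz `ρ_τ²` is at
most the product of the energies of `s` on `[τ, T]` and on `[0, T - τ]`; symmetrically `ρ_{T-τ}²`
is at most the product of those on `[T - τ, T]` and `[0, τ]`. With `a`, `b` the energies on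
`[0, τ]` and `[0, T - τ]`, the sum is at most `(1 - a) b + (1 - b) a`, and
`1 - (1 - a) b - (1 - b) a = (1 - a)(1 - b) + a b ≥ 0`. -/

theorem integral_mul_sq_le_integral_sq_mul_integral_sq {α : Type*} [MeasurableSpace α]
    {μ : Measure α} {f g : α → ℝ} (hf : MemLp f 2 μ) (hg : MemLp g 2 μ) :
    (∫ a, f a * g a ∂μ) ^ 2 ≤ (∫ a, f a ^ 2 ∂μ) * ∫ a, g a ^ 2 ∂μ := by
  have inner_toLp : ∀ {u v : α → ℝ} (hu : MemLp u 2 μ) (hv : MemLp v 2 μ),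
      inner ℝ (hu.toLp u) (hv.toLp v) = ∫ a, u a * v a ∂μ := fun hu hv => by
    rw [L2.inner_def]
    refine integral_congr_ae ?_
    filter_upwards [hu.coeFn_toLp, hv.coeFn_toLp] with a hua hva
    simp [hua, hva, mul_comm]
  simpa only [sq, inner_toLp] using real_inner_mul_inner_self_le (hf.toLp f) (hg.toLp g)

theorem sq_integral_mul_comp_sub_le {s : ℝ → ℝ} (hs : MemLp s 2)
    (hs_supp : Function.support s ⊆ Ici 0) {T σ : ℝ} (hσ0 : 0 ≤ σ) (hσT : σ ≤ T) :
    (∫ t in 0..T, s t * s (t - σ)) ^ 2 ≤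
      (∫ t in σ..T, s t ^ 2) * ∫ t in 0..T - σ, s t ^ 2 := by
  have hlag : ∫ t in 0..T, s t * s (t - σ) = ∫ t in σ..T, s t * s (t - σ) := by
    rw [intervalIntegral.integral_of_le (hσ0.trans hσT), intervalIntegral.integral_of_le hσT,
      ← integral_Ico_eq_integral_Ioc, ← integral_Ico_eq_integral_Ioc]
    refine setIntegral_eq_of_subset_of_forall_sdiff_eq_zero measurableSet_Ico
      (Ico_subset_Ico_left hσ0) fun t ht => ?_
    have ht_lt : t < σ := not_le.1 fun h => ht.2 ⟨h, ht.1.2⟩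
    have hs_lag : s (t - σ) = 0 :=
      Function.notMem_support.1 fun h => (mem_Ici.1 (hs_supp h)).not_gt (sub_neg.2 ht_lt)
    rw [hs_lag, mul_zero]
  have hshift : MemLp (fun t => s (t - σ)) 2 :=
    hs.comp_measurePreserving (measurePreserving_sub_right volume σ)
  have hcs := integral_mul_sq_le_integral_sq_mul_integral_sq
    (hs.restrict (Ioc σ T)) (hshift.restrict (Ioc σ T))
  rw [hlag, intervalIntegral.integral_of_le hσT, intervalIntegral.integral_of_le hσT]
  convert hcs using 2
  rw [← intervalIntegral.integral_of_le hσT,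
    intervalIntegral.integral_comp_sub_right (fun t => s t ^ 2), sub_self]

theorem stmt_4_general (Ts : ℝ)
    (s : ℝ → ℝ) (hmeas : Measurable s)
    (hsupp : Function.support s ⊆ Icc (0:ℝ) Ts)
    (hint : IntegrableOn (fun t => (s t) ^ 2) (Icc (0:ℝ) Ts))
    (henergy : ∫ t in (0:ℝ)..Ts, (s t) ^ 2 = 1)
    (ρ : ℝ → ℝ)
    (hρ : ∀ τ, ρ τ = ∫ t in (0:ℝ)..Ts, s t * s (t - τ))
    (τ : ℝ) (hτ : τ ∈ Icc (0:ℝ) Ts) :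
    (ρ τ) ^ 2 + (ρ (Ts - τ)) ^ 2 ≤ 1 := by
  obtain ⟨hτ0, hτT⟩ := hτ
  have hs_sq : Integrable (fun t => s t ^ 2) :=
    (integrableOn_iff_integrable_of_support_subset
      ((Function.support_pow s two_ne_zero).trans_subset hsupp)).1 hint
  have hs : MemLp s 2 := (memLp_two_iff_integrable_sq hmeas.aestronglyMeasurable).2 hs_sq
  have hs_supp : Function.support s ⊆ Ici 0 := hsupp.trans Icc_subset_Ici_self
  have hsplit : ∀ a, (∫ t in 0..a, s t ^ 2) + ∫ t in a..Ts, s t ^ 2 = 1 := fun a => by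
    rw [intervalIntegral.integral_add_adjacent_intervals hs_sq.intervalIntegrable
      hs_sq.intervalIntegrable, henergy]
  have hnonneg : ∀ a b, a ≤ b → 0 ≤ ∫ t in a..b, s t ^ 2 := fun a b hab =>
    intervalIntegral.integral_nonneg hab fun t _ => sq_nonneg _
  have hρτ := sq_integral_mul_comp_sub_le hs hs_supp hτ0 hτT
  have hρ_compl := sq_integral_mul_comp_sub_le hs hs_supp (sub_nonneg.2 hτT) (sub_le_self Ts hτ0)
  rw [sub_sub_cancel] at hρ_compl
  rw [hρ, hρ]
  nlinarith [hsplit τ, hsplit (Ts - τ), hnonneg 0 τ hτ0, hnonneg τ Ts hτT,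
    hnonneg 0 (Ts - τ) (by linarith), hnonneg (Ts - τ) Ts (by linarith)]

theorem stmt_4 (Ts : ℝ) (hTs : 0 < Ts)
    (s : ℝ → ℝ) (hmeas : Measurable s)
    (hsupp : Function.support s ⊆ Icc (0:ℝ) Ts)
    (hint : IntegrableOn (fun t => (s t) ^ 2) (Icc (0:ℝ) Ts))
    (henergy : ∫ t in (0:ℝ)..Ts, (s t) ^ 2 = 1)
    (ρ : ℝ → ℝ)
    (hρ : ∀ τ, ρ τ = ∫ t in (0:ℝ)..Ts, s t * s (t - τ))
    (τ : ℝ) (hτ : τ ∈ Icc (0:ℝ) Ts) :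
    (ρ τ) ^ 2 + (ρ (Ts - τ)) ^ 2 ≤ 1 :=
  stmt_4_general Ts s hmeas hsupp hint henergy ρ hρ τ hτ
end

section
/- Under the impractical assumption p^l = p^{l+1} (equal consecutive unit-modulus pilot symbols), the effective pilot energy satisfies |p^l ρ_Δ + p^{l+1} ρ_{T_s−Δ}|² = (ρ_Δ + ρ_{T_s−Δ})² ≤ 1 for any unit-energy waveform supported on [0,T_s], with equality for the rectangular waveform. -/
/-
On `[0, Tₛ]` the two pieces `s (t + Δ)` and `s (t - (Tₛ - Δ))` of `cyclicShift` form the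
cyclic rotation `r` of `s` by `Δ`. Since the autocorrelation of `s` is even,
`ρ_Δ + ρ_{Tₛ-Δ} = ∫₀^{Tₛ} s r`, and since the two pieces meet in a single point, `r` has the
same energy `1` on `[0, Tₛ]` as `s`. Cauchy–Schwarz gives the bound. The rectangular pulse is
invariant under rotation, so for it `∫₀^{Tₛ} s r = ∫₀^{Tₛ} s² = 1`.
-/

open MeasureTheory Set

theorem sq_integral_mul_le_integral_sq_mul_integral_sq {α : Type*} [MeasurableSpace α]
    {μ : Measure α} {f g : α → ℝ} (hf : MemLp f 2 μ) (hg : MemLp g 2 μ) :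
    (∫ x, f x * g x ∂μ) ^ 2 ≤ (∫ x, f x ^ 2 ∂μ) * ∫ x, g x ^ 2 ∂μ := by
  have hfg : Integrable (fun x => f x * g x) μ := hf.integrable_mul hg
  have hf2 : Integrable (fun x => f x ^ 2) μ := (memLp_two_iff_integrable_sq hf.1).1 hf
  have hg2 : Integrable (fun x => g x ^ 2) μ := (memLp_two_iff_integrable_sq hg.1).1 hg
  have hquad : ∀ c : ℝ, 0 ≤ (∫ x, g x ^ 2 ∂μ) * (c * c) + (-2 * ∫ x, f x * g x ∂μ) * c
      + ∫ x, f x ^ 2 ∂μ := by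
    intro c
    have hexpand : ∫ x, (f x - c * g x) ^ 2 ∂μ
        = ∫ x, f x ^ 2 - 2 * c * (f x * g x) + c ^ 2 * g x ^ 2 ∂μ :=
      integral_congr_ae (Filter.Eventually.of_forall fun x => by ring)
    have hnonneg : 0 ≤ ∫ x, (f x - c * g x) ^ 2 ∂μ :=
      integral_nonneg fun x => sq_nonneg _
    rw [hexpand, integral_add (by exact hf2.sub (hfg.const_mul (2 * c))) (hg2.const_mul _),
      integral_sub hf2 (hfg.const_mul _), integral_const_mul, integral_const_mul] at hnonneg
    linarith
  have hdiscrim := discrim_le_zero hquad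
  rw [discrim] at hdiscrim
  nlinarith

theorem intervalIntegral_eq_integral_of_support_subset_Icc {f : ℝ → ℝ} {a b : ℝ} (hab : a ≤ b)
    (h : Function.support f ⊆ Icc a b) : ∫ t in a..b, f t = ∫ t, f t := by
  rw [intervalIntegral.integral_of_le hab, ← integral_Icc_eq_integral_Ioc]
  exact setIntegral_eq_integral_of_forall_compl_eq_zero fun t ht =>
    Function.notMem_support.1 fun h' => ht (h h')

def cyclicShift (T Δ : ℝ) (s : ℝ → ℝ) (t : ℝ) : ℝ := s (t + Δ) + s (t - (T - Δ))

section

variable {T Δ : ℝ} {s : ℝ → ℝ}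

theorem MeasureTheory.MemLp.comp_add_right_real (hs : MemLp s 2) (c : ℝ) :
    MemLp (fun t => s (t + c)) 2 :=
  hs.comp_measurePreserving (measurePreserving_add_right volume c)

theorem MeasureTheory.MemLp.comp_sub_right_real (hs : MemLp s 2) (c : ℝ) :
    MemLp (fun t => s (t - c)) 2 :=
  hs.comp_measurePreserving (measurePreserving_sub_right volume c)

theorem MeasureTheory.MemLp.cyclicShift (hs : MemLp s 2) : MemLp (cyclicShift T Δ s) 2 :=
  (hs.comp_add_right_real Δ).add (hs.comp_sub_right_real (T - Δ))

theorem intervalIntegral_mul_comp_add_right_eq_comp_sub_right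
    (hsupp : Function.support s ⊆ Icc 0 T) (hT : 0 ≤ T) (τ : ℝ) :
    ∫ t in 0..T, s t * s (t + τ) = ∫ t in 0..T, s t * s (t - τ) := by
  rw [intervalIntegral_eq_integral_of_support_subset_Icc hT
      ((Function.support_mul_subset_left _ _).trans hsupp),
    intervalIntegral_eq_integral_of_support_subset_Icc hT
      ((Function.support_mul_subset_left _ _).trans hsupp),
    ← integral_sub_right_eq_self _ τ]
  simp only [sub_add_cancel, mul_comm]

theorem intervalIntegral_mul_cyclicShift (hs : MemLp s 2) (hsupp : Function.support s ⊆ Icc 0 T)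
    (hT : 0 ≤ T) :
    ∫ t in 0..T, s t * cyclicShift T Δ s t
      = (∫ t in 0..T, s t * s (t - Δ)) + ∫ t in 0..T, s t * s (t - (T - Δ)) := by
  simp only [cyclicShift, mul_add]
  rw [intervalIntegral.integral_add,
    intervalIntegral_mul_comp_add_right_eq_comp_sub_right hsupp hT]
  · exact (hs.integrable_mul (hs.comp_add_right_real Δ)).intervalIntegrable
  · exact (hs.integrable_mul (hs.comp_sub_right_real (T - Δ))).intervalIntegrable

theorem intervalIntegral_cyclicShift_sq (hs : MemLp s 2) (hsupp : Function.support s ⊆ Icc 0 T)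
    (hΔ : Δ ∈ Icc 0 T) :
    ∫ t in 0..T, cyclicShift T Δ s t ^ 2 = ∫ t in 0..T, s t ^ 2 := by
  obtain ⟨hΔ0, hΔT⟩ := hΔ
  have hs2 : Integrable (fun t => s t ^ 2) := (memLp_two_iff_integrable_sq hs.1).1 hs
  have hsupp2 : Function.support (fun t => s t ^ 2) ⊆ Icc 0 T := by
    rwa [Function.support_pow _ two_ne_zero]
  have hpieces : ∀ᵐ t, cyclicShift T Δ s t ^ 2 = s (t + Δ) ^ 2 + s (t - (T - Δ)) ^ 2 := by
    filter_upwards [volume.ae_ne (T - Δ)] with t ht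
    have hcross : s (t + Δ) * s (t - (T - Δ)) = 0 := by
      by_contra h
      have h1 := hsupp (left_ne_zero_of_mul h)
      have h2 := hsupp (right_ne_zero_of_mul h)
      exact ht (by linarith [h1.2, h2.1])
    simp only [cyclicShift]
    linear_combination 2 * hcross
  calc ∫ t in 0..T, cyclicShift T Δ s t ^ 2
      = (∫ t in 0..T, s (t + Δ) ^ 2) + ∫ t in 0..T, s (t - (T - Δ)) ^ 2 := by
        rw [intervalIntegral.integral_congr_ae (hpieces.mono fun t ht _ => ht),
          intervalIntegral.integral_add (hs2.comp_add_right Δ).intervalIntegrable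
            (hs2.comp_sub_right (T - Δ)).intervalIntegrable]
    _ = ∫ t in -(T - Δ)..T + Δ, s t ^ 2 := by
        rw [intervalIntegral.integral_comp_add_right (fun t => s t ^ 2),
          intervalIntegral.integral_comp_sub_right (fun t => s t ^ 2), zero_add, zero_sub,
          sub_sub_cancel, add_comm, intervalIntegral.integral_add_adjacent_intervals
            hs2.intervalIntegrable hs2.intervalIntegrable]
    _ = ∫ t, s t ^ 2 := intervalIntegral_eq_integral_of_support_subset_Icc (by linarith)
        (hsupp2.trans (Icc_subset_Icc (by linarith) (by linarith)))
    _ = ∫ t in 0..T, s t ^ 2 :=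
        (intervalIntegral_eq_integral_of_support_subset_Icc (by linarith) hsupp2).symm

theorem cyclicShift_ae_eq_of_eq_ite {c : ℝ} (hrect : ∀ t, s t = if t ∈ Icc 0 T then c else 0)
    (hΔ : Δ ∈ Icc 0 T) : ∀ᵐ t, t ∈ Ioc 0 T → cyclicShift T Δ s t = s t := by
  obtain ⟨hΔ0, hΔT⟩ := hΔ
  filter_upwards [volume.ae_ne (T - Δ)] with t ht ⟨h0, hT⟩
  simp only [cyclicShift, hrect, mem_Icc]
  rcases ht.lt_or_gt with hlt | hgt
  · rw [if_pos ⟨by linarith, by linarith⟩, if_neg (by intro h; linarith [h.1]),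
      if_pos ⟨h0.le, hT⟩, add_zero]
  · rw [if_neg (by intro h; linarith [h.2]), if_pos ⟨by linarith, by linarith⟩,
      if_pos ⟨h0.le, hT⟩, zero_add]

end

theorem stmt_8_general (Ts : ℝ)
    (s : ℝ → ℝ) (hmeas : Measurable s)
    (hsupp : Function.support s ⊆ Icc (0:ℝ) Ts)
    (hint : IntegrableOn (fun t => (s t) ^ 2) (Icc (0:ℝ) Ts))
    (henergy : ∫ t in (0:ℝ)..Ts, (s t) ^ 2 = 1)
    (ρ : ℝ → ℝ)
    (hρ : ∀ τ, ρ τ = ∫ t in (0:ℝ)..Ts, s t * s (t - τ))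
    (Δ : ℝ) (hΔ : Δ ∈ Icc (0:ℝ) Ts)
    (p : ℂ) (hp : ‖p‖ = 1) :
    ‖p * (ρ Δ : ℝ) + p * (ρ (Ts - Δ) : ℝ)‖ ^ 2
      = (ρ Δ + ρ (Ts - Δ)) ^ 2 ∧
    (ρ Δ + ρ (Ts - Δ)) ^ 2 ≤ 1 ∧
    ((∀ t, s t = if t ∈ Icc (0:ℝ) Ts then 1 / Real.sqrt Ts else 0) →
      (ρ Δ + ρ (Ts - Δ)) ^ 2 = 1) := by
  have hTs : 0 ≤ Ts := hΔ.1.trans hΔ.2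
  have hs : MemLp s 2 := (memLp_two_iff_integrable_sq hmeas.aestronglyMeasurable).2 <|
    (integrableOn_iff_integrable_of_support_subset
      (by rwa [Function.support_pow _ two_ne_zero])).1 hint
  have hsum : ρ Δ + ρ (Ts - Δ) = ∫ t in 0..Ts, s t * cyclicShift Ts Δ s t := by
    rw [hρ, hρ, intervalIntegral_mul_cyclicShift hs hsupp hTs]
  refine ⟨?_, ?_, fun hrect => ?_⟩
  · rw [← mul_add, ← Complex.ofReal_add, norm_mul, hp, one_mul, Complex.norm_real,
      Real.norm_eq_abs, sq_abs]
  · calc (ρ Δ + ρ (Ts - Δ)) ^ 2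
        ≤ (∫ t in 0..Ts, s t ^ 2) * ∫ t in 0..Ts, cyclicShift Ts Δ s t ^ 2 := by
          simp only [hsum, intervalIntegral.integral_of_le hTs]
          exact sq_integral_mul_le_integral_sq_mul_integral_sq (hs.restrict _)
            (hs.cyclicShift.restrict _)
      _ = 1 := by rw [intervalIntegral_cyclicShift_sq hs hsupp hΔ, henergy, one_mul]
  · have hself : ∫ t in 0..Ts, s t * cyclicShift Ts Δ s t = ∫ t in 0..Ts, s t ^ 2 :=
      intervalIntegral.integral_congr_ae <| by
        rw [uIoc_of_le hTs]
        exact (cyclicShift_ae_eq_of_eq_ite hrect hΔ).mono fun t ht hmem => by rw [ht hmem, sq]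
    rw [hsum, hself, henergy, one_pow]

theorem stmt_8 (Ts : ℝ) (hTs : 0 < Ts)
    (s : ℝ → ℝ) (hmeas : Measurable s)
    (hsupp : Function.support s ⊆ Icc (0:ℝ) Ts)
    (hint : IntegrableOn (fun t => (s t) ^ 2) (Icc (0:ℝ) Ts))
    (henergy : ∫ t in (0:ℝ)..Ts, (s t) ^ 2 = 1)
    (ρ : ℝ → ℝ)
    (hρ : ∀ τ, ρ τ = ∫ t in (0:ℝ)..Ts, s t * s (t - τ))
    (Δ : ℝ) (hΔ : Δ ∈ Icc (0:ℝ) Ts)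
    (p : ℂ) (hp : ‖p‖ = 1) :
    ‖p * (ρ Δ : ℝ) + p * (ρ (Ts - Δ) : ℝ)‖ ^ 2
      = (ρ Δ + ρ (Ts - Δ)) ^ 2 ∧
    (ρ Δ + ρ (Ts - Δ)) ^ 2 ≤ 1 ∧
    ((∀ t, s t = if t ∈ Icc (0:ℝ) Ts then 1 / Real.sqrt Ts else 0) →
      (ρ Δ + ρ (Ts - Δ)) ^ 2 = 1) :=
  stmt_8_general Ts s hmeas hsupp hint henergy ρ hρ Δ hΔ p hp
end
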